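/- Let n ≥ 3, ε > 0 and v_ε(x) = ε^((n-2)/2) · ((ε + xₙ)² + Σ_{a=1}^{n-1} x_a²)^(-(n-2)/2). Then ∫_{ℝⁿ₊} |∇v_ε(x)|² dx = (n−2) · ∫_{∂ℝⁿ₊} v_ε(y)^(2(n-1)/(n-2)) dσ(y), where dσ is the (n−1)-dimensional Lebesgue measure on the boundary {xₙ = 0}. -/

import Mathlib

open scoped BigOperators
open MeasureTheory

noncomputable section

abbrev E (n : ℕ) := EuclideanSpace ℝ (Fin n)

/-- Partial derivative in the `i`-th coordinate direction. -/
def pder {n : ℕ} (i : Fin n) (f : E n → ℝ) (x : E n) : ℝ :=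
  fderiv ℝ f x (EuclideanSpace.single i 1)

/-- Euclidean Laplacian. -/
def lap {n : ℕ} (f : E n → ℝ) (x : E n) : ℝ :=
  ∑ i, pder i (pder i f) x

/-- The index of the last ("normal") coordinate `x_n`. -/
def nIdx (n : ℕ) (hn : 0 < n) : Fin n := ⟨n - 1, Nat.sub_lt hn one_pos⟩

/-- The model function `v_ε` on the upper half-space. -/
def vE (n : ℕ) (hn : 0 < n) (ε : ℝ) (x : E n) : ℝ :=
  ε ^ (((n : ℝ) - 2) / 2) *
    ((ε + x (nIdx n hn)) ^ 2 + ∑ a ∈ Finset.univ.erase (nIdx n hn), x a ^ 2) ^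
      (-(((n : ℝ) - 2) / 2))

/-- Extension of a point of `ℝ^{n-1}` to the boundary hyperplane of `ℝⁿ`. -/
def emb (n : ℕ) (y : E (n - 1)) : E n :=
  WithLp.toLp 2 (fun i : Fin n => if h : (i : ℕ) < n - 1 then y ⟨i, h⟩ else 0)

open scoped ENNReal
open Set

/-!
With `c = ε eₙ`, `v_ε = ε^((n-2)/2) ‖x + c‖^(-(n-2))`, so
`|∇v_ε|² = (n-2)² ε^(n-2) ((ε + xₙ)² + |x'|²)^(-(n-1))`. Both sides are multiples of
`K = ∫_{ℝⁿ⁻¹} (1 + |y|²)^(-(n-1)) dy`: the substitution `y = s z` gives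
`∫ (s² + |y|²)^(-(n-1)) dy = s^(-(n-1)) K`, so the horizontal slice of the half-space at height
`t` contributes `(ε + t)^(-(n-1)) K`, and `∫₀^∞ (ε + t)^(-(n-1)) dt = ε^(-(n-2)) / (n-2)`; on the
boundary `v_ε^(2(n-1)/(n-2)) = ε^(n-1) (ε² + |y|²)^(-(n-1))` integrates to exactly `K`.
Working with lower Lebesgue integrals, Tonelli applies and finiteness of `K` is never needed.
-/

theorem EuclideanSpace.sq_add_sum_erase_sq_eq_norm_add_single_sq {ι : Type*} [Fintype ι]
    [DecidableEq ι] (x : EuclideanSpace ℝ ι) (i : ι) (ε : ℝ) :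
    (ε + x i) ^ 2 + ∑ a ∈ Finset.univ.erase i, x a ^ 2 =
      ‖x + EuclideanSpace.single i ε‖ ^ 2 := by
  rw [EuclideanSpace.real_norm_sq_eq, ← Finset.add_sum_erase _ _ (Finset.mem_univ i)]
  congr 1
  · simp [add_comm]
  · refine Finset.sum_congr rfl fun a ha => ?_
    simp [Finset.ne_of_mem_erase ha]

theorem vE_eq_rpow_norm_sq {n : ℕ} (hn : 0 < n) (ε : ℝ) :
    vE n hn ε = fun x => ε ^ (((n : ℝ) - 2) / 2) *
      (‖x + EuclideanSpace.single (nIdx n hn) ε‖ ^ 2) ^ (-(((n : ℝ) - 2) / 2)) := by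
  funext x
  rw [vE, EuclideanSpace.sq_add_sum_erase_sq_eq_norm_add_single_sq]

@[simp]
theorem nIdx_succ (d : ℕ) (h : 0 < d + 1) : nIdx (d + 1) h = Fin.last d :=
  rfl

theorem pder_const_mul_rpow_norm_add_sq {n : ℕ} (a p : ℝ) {c x : E n} (hx : x + c ≠ 0)
    (i : Fin n) :
    pder i (fun y => a * (‖y + c‖ ^ 2) ^ (-p)) x =
      -2 * a * p * (‖x + c‖ ^ 2) ^ (-p - 1) * (x + c) i := by
  have hderiv : HasFDerivAt (fun y : E n => a * (‖y + c‖ ^ 2) ^ (-p)) _ x :=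
    ((((hasFDerivAt_id x).add_const c).norm_sq).rpow_const (p := -p)
      (Or.inl (by positivity))).const_mul a
  rw [pder, hderiv.fderiv]
  simp only [id_eq, neg_mul, map_add, ContinuousLinearMap.comp_id, smul_add, neg_smul, smul_neg,
    add_apply, neg_apply, smul_apply,
    coe_innerSL_apply, EuclideanSpace.inner_single_right, Real.ringHom_apply, one_mul,
    nsmul_eq_mul, Nat.cast_ofNat, smul_eq_mul, PiLp.add_apply]
  ring

theorem sum_pder_sq_const_mul_rpow_norm_add_sq {n : ℕ} (a p : ℝ) {c x : E n}
    (hx : x + c ≠ 0) :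
    ∑ i, pder i (fun y => a * (‖y + c‖ ^ 2) ^ (-p)) x ^ 2 =
      (2 * a * p) ^ 2 * (‖x + c‖ ^ 2) ^ (-2 * p - 1) := by
  have hpos : 0 < ‖x + c‖ ^ 2 := by positivity
  simp_rw [pder_const_mul_rpow_norm_add_sq a p hx, mul_pow, ← Finset.mul_sum,
    ← EuclideanSpace.real_norm_sq_eq]
  have hexp : ((‖x + c‖ ^ 2) ^ (-p - 1)) ^ 2 * ‖x + c‖ ^ 2 = (‖x + c‖ ^ 2) ^ (-2 * p - 1) := by
    rw [← Real.rpow_two, ← Real.rpow_mul hpos.le, ← Real.rpow_add_one hpos.ne']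
    ring_nf
  rw [mul_assoc, hexp]
  ring

theorem sum_pder_sq_vE {n : ℕ} (hn : 0 < n) {ε : ℝ} (hε : 0 < ε) {x : E n}
    (hx : x + EuclideanSpace.single (nIdx n hn) ε ≠ 0) :
    ∑ i, pder i (vE n hn ε) x ^ 2 = ((n : ℝ) - 2) ^ 2 * ε ^ ((n : ℝ) - 2) *
      (‖x + EuclideanSpace.single (nIdx n hn) ε‖ ^ 2) ^ (-((n : ℝ) - 1)) := by
  rw [vE_eq_rpow_norm_sq, sum_pder_sq_const_mul_rpow_norm_add_sq _ _ hx]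
  have hε2 : (ε ^ (((n : ℝ) - 2) / 2)) ^ 2 = ε ^ ((n : ℝ) - 2) := by
    rw [← Real.rpow_two, ← Real.rpow_mul hε.le]
    ring_nf
  rw [mul_pow, mul_pow, hε2]
  ring_nf

def splitLast (d : ℕ) : E (d + 1) ≃ᵐ ℝ × E d :=
  (MeasurableEquiv.toLp 2 (Fin (d + 1) → ℝ)).symm.trans <|
    (MeasurableEquiv.piFinSuccAbove (fun _ => ℝ) (Fin.last d)).trans <|
      MeasurableEquiv.prodCongr (MeasurableEquiv.refl ℝ) (MeasurableEquiv.toLp 2 (Fin d → ℝ))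

theorem measurePreserving_splitLast (d : ℕ) : MeasurePreserving (splitLast d) := by
  refine (EuclideanSpace.volume_preserving_symm_measurableEquiv_toLp _).trans <|
    (volume_preserving_piFinSuccAbove (fun _ => ℝ) (Fin.last d)).trans ?_
  rw [Measure.volume_eq_prod, Measure.volume_eq_prod]
  exact (MeasurePreserving.id volume).prod
    (EuclideanSpace.volume_preserving_symm_measurableEquiv_toLp _).symm

@[simp]
theorem splitLast_fst {d : ℕ} (x : E (d + 1)) : (splitLast d x).1 = x (Fin.last d) :=
  rfl

@[simp]
theorem splitLast_snd_apply {d : ℕ} (x : E (d + 1)) (b : Fin d) :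
    (splitLast d x).2 b = x b.castSucc := by
  change x ((Fin.last d).succAbove b) = _
  rw [Fin.succAbove_last]

theorem splitLast_emb {d : ℕ} (y : E d) : splitLast d (emb (d + 1) y) = (0, y) := by
  ext b
  · simp [emb]
  · simp [emb]

theorem norm_add_single_last_sq {d : ℕ} (x : E (d + 1)) (ε : ℝ) :
    ‖x + EuclideanSpace.single (Fin.last d) ε‖ ^ 2 =
      (ε + (splitLast d x).1) ^ 2 + ‖(splitLast d x).2‖ ^ 2 := by
  simp [EuclideanSpace.real_norm_sq_eq, Fin.sum_univ_castSucc, add_comm,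
    (Fin.castSucc_lt_last _).ne]

theorem lintegral_ofReal_sq_add_norm_sq_rpow {F : Type*} [NormedAddCommGroup F]
    [NormedSpace ℝ F] [MeasurableSpace F] [BorelSpace F] [FiniteDimensional ℝ F]
    (μ : Measure F) [μ.IsAddHaarMeasure] (r : ℝ) {s : ℝ} (hs : 0 < s) :
    ∫⁻ y, ENNReal.ofReal ((s ^ 2 + ‖y‖ ^ 2) ^ r) ∂μ =
      ENNReal.ofReal (s ^ ((Module.finrank ℝ F : ℝ) + 2 * r)) *
        ∫⁻ y, ENNReal.ofReal ((1 + ‖y‖ ^ 2) ^ r) ∂μ := by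
  set k := Module.finrank ℝ F
  have hmap : μ.map (s • ·) = ENNReal.ofReal (s ^ k)⁻¹ • μ := by
    rw [Measure.map_addHaar_smul μ hs.ne', abs_of_pos (by positivity)]
  have hscale (z : F) : s ^ 2 + ‖s • z‖ ^ 2 = s ^ 2 * (1 + ‖z‖ ^ 2) := by
    rw [norm_smul, Real.norm_of_nonneg hs.le]
    ring
  calc ∫⁻ y, ENNReal.ofReal ((s ^ 2 + ‖y‖ ^ 2) ^ r) ∂μ
      = ENNReal.ofReal (s ^ k) * ∫⁻ y, ENNReal.ofReal ((s ^ 2 + ‖y‖ ^ 2) ^ r) ∂μ.map (s • ·) := by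
        rw [hmap, lintegral_smul_measure, smul_eq_mul, ← mul_assoc,
          ← ENNReal.ofReal_mul (by positivity), mul_inv_cancel₀ (by positivity),
          ENNReal.ofReal_one, one_mul]
    _ = ENNReal.ofReal (s ^ k) *
          ∫⁻ z, ENNReal.ofReal ((s ^ 2) ^ r) * ENNReal.ofReal ((1 + ‖z‖ ^ 2) ^ r) ∂μ := by
        rw [lintegral_map (by fun_prop) (measurable_const_smul s)]
        refine congrArg _ (lintegral_congr fun z => ?_)
        rw [hscale, Real.mul_rpow (sq_nonneg s) (by positivity),
          ENNReal.ofReal_mul (by positivity)]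
    _ = ENNReal.ofReal (s ^ ((k : ℝ) + 2 * r)) * ∫⁻ y, ENNReal.ofReal ((1 + ‖y‖ ^ 2) ^ r) ∂μ := by
        rw [lintegral_const_mul' _ _ ENNReal.ofReal_ne_top, ← mul_assoc,
          ← ENNReal.ofReal_mul (by positivity), Real.rpow_add hs, Real.rpow_natCast,
          ← Real.rpow_natCast s 2, ← Real.rpow_mul hs.le]
        norm_num

theorem lintegral_Ici_ofReal_add_rpow {ε a : ℝ} (hε : 0 < ε) (ha : a < -1) :
    ∫⁻ t in Ici 0, ENNReal.ofReal ((ε + t) ^ a) = ENNReal.ofReal (-ε ^ (a + 1) / (a + 1)) := by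
  have hpre : (ε + ·) ⁻¹' Ioi ε = Ioi (0 : ℝ) := by ext; simp
  rw [← restrict_Ioi_eq_restrict_Ici, ← hpre,
    (measurePreserving_add_left volume ε).setLIntegral_comp_preimage_emb
      (MeasurableEquiv.addLeft ε).measurableEmbedding (fun u => ENNReal.ofReal (u ^ a)),
    ← integral_Ioi_rpow_of_lt ha hε,
    ofReal_integral_eq_lintegral_ofReal (integrableOn_Ioi_rpow_of_lt ha hε)]
  filter_upwards [ae_restrict_mem measurableSet_Ioi] with u hu
  exact Real.rpow_nonneg (hε.trans hu).le a

theorem setLIntegral_halfSpace {d : ℕ} {g : ℝ × E d → ℝ≥0∞} (hg : Measurable g) :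
    ∫⁻ x in {x : E (d + 1) | 0 ≤ x (Fin.last d)}, g (splitLast d x) =
      ∫⁻ t in Ici 0, ∫⁻ y, g (t, y) := by
  have hH : {x : E (d + 1) | 0 ≤ x (Fin.last d)} = splitLast d ⁻¹' (Ici 0 ×ˢ univ) := by
    ext x; simp
  rw [hH, (measurePreserving_splitLast d).setLIntegral_comp_preimage_emb
      (splitLast d).measurableEmbedding, Measure.volume_eq_prod, ← Measure.prod_restrict,
    Measure.restrict_univ, lintegral_prod _ hg.aemeasurable]

theorem sum_pder_sq_vE_of_nonneg_last {d : ℕ} {ε : ℝ} (hε : 0 < ε) {x : E (d + 1)}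
    (hx : 0 ≤ x (Fin.last d)) :
    ∑ i, pder i (vE (d + 1) d.succ_pos ε) x ^ 2 =
      ((d : ℝ) - 1) ^ 2 * ε ^ ((d : ℝ) - 1) *
        ((ε + (splitLast d x).1) ^ 2 + ‖(splitLast d x).2‖ ^ 2) ^ (-(d : ℝ)) := by
  have hx' : x + EuclideanSpace.single (nIdx (d + 1) d.succ_pos) ε ≠ 0 := by
    intro h
    have := congrArg (· (Fin.last d)) h
    simp at this
    linarith
  rw [sum_pder_sq_vE _ hε hx', nIdx_succ, norm_add_single_last_sq]
  push_cast
  ring_nf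

theorem lintegral_energy_vE {d : ℕ} (hd : 2 ≤ d) {ε : ℝ} (hε : 0 < ε) :
    ∫⁻ x in {x : E (d + 1) | 0 ≤ x (nIdx (d + 1) d.succ_pos)},
        ENNReal.ofReal (∑ i, pder i (vE (d + 1) d.succ_pos ε) x ^ 2) =
      ENNReal.ofReal ((d : ℝ) - 1) * ∫⁻ y : E d, ENNReal.ofReal ((1 + ‖y‖ ^ 2) ^ (-(d : ℝ))) := by
  have hd1 : (1 : ℝ) < d := by exact_mod_cast hd
  set K := ∫⁻ y : E d, ENNReal.ofReal ((1 + ‖y‖ ^ 2) ^ (-(d : ℝ)))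
  have hdensity : ∀ x ∈ {x : E (d + 1) | 0 ≤ x (Fin.last d)},
      ENNReal.ofReal (∑ i, pder i (vE (d + 1) d.succ_pos ε) x ^ 2) =
        ENNReal.ofReal (((d : ℝ) - 1) ^ 2 * ε ^ ((d : ℝ) - 1)) *
          ENNReal.ofReal (((ε + (splitLast d x).1) ^ 2 + ‖(splitLast d x).2‖ ^ 2) ^ (-(d : ℝ))) :=
    fun x hx => by
      rw [sum_pder_sq_vE_of_nonneg_last hε hx, ENNReal.ofReal_mul (by positivity)]
  have hslice : ∀ t ∈ Ici (0 : ℝ),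
      ∫⁻ y : E d, ENNReal.ofReal (((ε + t) ^ 2 + ‖y‖ ^ 2) ^ (-(d : ℝ))) =
        ENNReal.ofReal ((ε + t) ^ (-(d : ℝ))) * K := by
    intro t ht
    rw [lintegral_ofReal_sq_add_norm_sq_rpow _ _ (by linarith [mem_Ici.mp ht]),
      finrank_euclideanSpace_fin]
    congr 3
    ring
  rw [nIdx_succ, setLIntegral_congr_fun (measurableSet_le measurable_const (by fun_prop)) hdensity,
    lintegral_const_mul' _ _ ENNReal.ofReal_ne_top,
    setLIntegral_halfSpace (g := fun p => ENNReal.ofReal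
      (((ε + p.1) ^ 2 + ‖p.2‖ ^ 2) ^ (-(d : ℝ)))) (by fun_prop),
    setLIntegral_congr_fun measurableSet_Ici hslice,
    lintegral_mul_const _ (by fun_prop), lintegral_Ici_ofReal_add_rpow hε (by linarith),
    ← mul_assoc, ← ENNReal.ofReal_mul (by positivity)]
  congr 2
  have hcancel : ε ^ ((d : ℝ) - 1) * ε ^ (-(d : ℝ) + 1) = 1 := by
    rw [← Real.rpow_add hε]; simp
  have hne : -(d : ℝ) + 1 ≠ 0 := by linarith
  calc ((d : ℝ) - 1) ^ 2 * ε ^ ((d : ℝ) - 1) * (-ε ^ (-(d : ℝ) + 1) / (-(d : ℝ) + 1))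
      = ((d : ℝ) - 1) * (ε ^ ((d : ℝ) - 1) * ε ^ (-(d : ℝ) + 1)) := by
        field_simp
        ring
    _ = (d : ℝ) - 1 := by rw [hcancel, mul_one]

theorem vE_emb_rpow {d : ℕ} (hd : 2 ≤ d) {ε : ℝ} (hε : 0 < ε) (y : E d) :
    vE (d + 1) d.succ_pos ε (emb (d + 1) y) ^
        (2 * (((d + 1 : ℕ) : ℝ) - 1) / (((d + 1 : ℕ) : ℝ) - 2)) =
      ε ^ (d : ℝ) * (ε ^ 2 + ‖y‖ ^ 2) ^ (-(d : ℝ)) := by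
  have hd1 : (1 : ℝ) < d := by exact_mod_cast hd
  simp only [vE_eq_rpow_norm_sq, nIdx_succ, norm_add_single_last_sq, splitLast_emb, add_zero]
  rw [Real.mul_rpow (by positivity) (by positivity), ← Real.rpow_mul hε.le,
    ← Real.rpow_mul (by positivity)]
  have hexp : (((d + 1 : ℕ) : ℝ) - 2) / 2 * (2 * (((d + 1 : ℕ) : ℝ) - 1) / (((d + 1 : ℕ) : ℝ) - 2))
      = d := by
    have hne : (d : ℝ) + 1 - 2 ≠ 0 := by linarith
    push_cast
    field_simp
    ring
  rw [neg_mul, hexp]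

theorem lintegral_bubble_trace (d : ℕ) {ε : ℝ} (hε : 0 < ε) :
    ∫⁻ y : E d, ENNReal.ofReal (ε ^ (d : ℝ) * (ε ^ 2 + ‖y‖ ^ 2) ^ (-(d : ℝ))) =
      ∫⁻ y : E d, ENNReal.ofReal ((1 + ‖y‖ ^ 2) ^ (-(d : ℝ))) := by
  simp_rw [ENNReal.ofReal_mul (Real.rpow_nonneg hε.le _)]
  rw [lintegral_const_mul' _ _ ENNReal.ofReal_ne_top, lintegral_ofReal_sq_add_norm_sq_rpow _ _ hε,
    finrank_euclideanSpace_fin, ← mul_assoc, ← ENNReal.ofReal_mul (by positivity),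
    ← Real.rpow_add hε, show (d : ℝ) + ((d : ℝ) + 2 * -(d : ℝ)) = 0 by ring, Real.rpow_zero,
    ENNReal.ofReal_one, one_mul]

/-- Dirichlet energy of `v_ε` equals `(n-2)` times the critical boundary integral. -/
theorem v_energy (n : ℕ) (hn : 3 ≤ n) (ε : ℝ) (hε : 0 < ε) :
    ∫ x in {x : E n | 0 ≤ x (nIdx n (by omega))},
        (∑ i, pder i (vE n (by omega) ε) x ^ 2) =
      ((n : ℝ) - 2) *
        ∫ y : E (n - 1),
          vE n (by omega) ε (emb n y) ^ (2 * ((n : ℝ) - 1) / ((n : ℝ) - 2)) := by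
  obtain ⟨d, rfl⟩ : ∃ d, n = d + 1 := ⟨n - 1, by omega⟩
  have hd : 2 ≤ d := by omega
  have hmeas : Measurable fun x : E (d + 1) => ∑ i, pder i (vE (d + 1) d.succ_pos ε) x ^ 2 :=
    Finset.measurable_sum _ fun i _ => (measurable_fderiv_apply_const ℝ _ _).pow_const 2
  simp only [vE_emb_rpow hd hε]
  rw [integral_eq_lintegral_of_nonneg_ae (ae_of_all _ fun x => by positivity)
      hmeas.aestronglyMeasurable.restrict, lintegral_energy_vE hd hε,
    integral_eq_lintegral_of_nonneg_ae (ae_of_all _ fun y => by positivity)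
      (Measurable.aestronglyMeasurable (by fun_prop))]
  -- `E (d + 1 - 1)` is `E d` only after unfolding `Nat.sub`, hence `erw`.
  erw [lintegral_bubble_trace d hε]
  rw [ENNReal.toReal_mul, ENNReal.toReal_ofReal (by simp; linarith)]
  push_cast
  ring
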